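/- arXiv:2006.02304 — 3 statements merged into one kernel-verified Lean document; each statement's English description precedes it below -/
import Mathlib

section
/- For any fair infinite path π of an asynchronous Boolean network, the set I(π) of states that occur infinitely often in π is an attractor of the network. -/
/-- Asynchronous transition relation of a Boolean network with update
functions `f`: `s → s'` iff `s' = Function.update s i (f i s)` for some `i`. -/
def BNStep {n : ℕ} (f : Fin n → (Fin n → Bool) → Bool)
    (s s' : Fin n → Bool) : Prop :=
  ∃ i : Fin n, s' = Function.update s i (f i s)

/-- The set of states reachable from `s` (reflexive-transitive closure). -/
def BNReach {n : ℕ} (f : Fin n → (Fin n → Bool) → Bool)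
    (s : Fin n → Bool) : Set (Fin n → Bool) :=
  {s' | Relation.ReflTransGen (BNStep f) s s'}

/-- An attractor: a nonempty set `A` with `reach s = A` for every `s ∈ A`. -/
def IsAttractor {n : ℕ} (f : Fin n → (Fin n → Bool) → Bool)
    (A : Set (Fin n → Bool)) : Prop :=
  A.Nonempty ∧ ∀ s ∈ A, BNReach f s = A

/-- Weak basin of `A`. -/
def basW {n : ℕ} (f : Fin n → (Fin n → Bool) → Bool)
    (A : Set (Fin n → Bool)) : Set (Fin n → Bool) :=
  {s | (BNReach f s ∩ A).Nonempty}

/-- Strong basin of `A`. -/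
def basS {n : ℕ} (f : Fin n → (Fin n → Bool) → Bool)
    (A : Set (Fin n → Bool)) : Set (Fin n → Bool) :=
  {s | (BNReach f s ∩ A).Nonempty ∧
    ∀ A' : Set (Fin n → Bool), IsAttractor f A' → A' ≠ A → BNReach f s ∩ A' = ∅}

/-- An infinite path of the asynchronous dynamics. -/
def IsPath {n : ℕ} (f : Fin n → (Fin n → Bool) → Bool)
    (π : ℕ → Fin n → Bool) : Prop :=
  ∀ k : ℕ, BNStep f (π k) (π (k + 1))

/-- `x` occurs infinitely often in `π`. -/
def InfOften {n : ℕ} (π : ℕ → Fin n → Bool) (x : Fin n → Bool) : Prop :=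
  ∀ i : ℕ, ∃ j ≥ i, π j = x

/-- Fairness: every successor of every infinitely-often state occurs
infinitely often. -/
def Fair {n : ℕ} (f : Fin n → (Fin n → Bool) → Bool)
    (π : ℕ → Fin n → Bool) : Prop :=
  ∀ x : Fin n → Bool, InfOften π x →
    ∀ x' : Fin n → Bool, BNStep f x x' → InfOften π x'

/-- Applying a control `C = (O, I)` to a state. -/
def applyC {n : ℕ} (O I : Finset (Fin n)) (s : Fin n → Bool) : Fin n → Bool :=
  fun i => if i ∈ O then false else if i ∈ I then true else s i

/-- The restricted state space `S|C`. -/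
def restrC {n : ℕ} (O I : Finset (Fin n)) : Set (Fin n → Bool) :=
  {s | (∀ i ∈ O, s i = false) ∧ (∀ i ∈ I, s i = true)}

/-- Update functions of the controlled network `G|C`. -/
def ctrlF {n : ℕ} (f : Fin n → (Fin n → Bool) → Bool) (O I : Finset (Fin n)) :
    Fin n → (Fin n → Bool) → Bool :=
  fun i s => if i ∈ O then false else if i ∈ I then true else f i s

/-- `C` is a temporary target control for `At`: for every source state `s`,
every fair infinite path of the controlled network `G|C` starting from `C(s)`
eventually reaches the strong basin of `At` in the original network. -/
def IsTTC {n : ℕ} (f : Fin n → (Fin n → Bool) → Bool) (O I : Finset (Fin n))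
    (At : Set (Fin n → Bool)) : Prop :=
  ∀ s : Fin n → Bool, ∀ π : ℕ → Fin n → Bool,
    π 0 = applyC O I s → IsPath (ctrlF f O I) π → Fair (ctrlF f O I) π →
    ∃ k : ℕ, π k ∈ basS f At

/-! Some state recurs because the state space is finite. Fairness makes the recurrent set
closed under steps, and the tail of the path between two recurrences shows that each
recurrent state reaches every other one. -/

theorem IsPath.reach_of_le {n : ℕ} {f : Fin n → (Fin n → Bool) → Bool} {π : ℕ → Fin n → Bool}
    (hpath : IsPath f π) {a b : ℕ} (hab : a ≤ b) : π b ∈ BNReach f (π a) :=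
  (reflTransGen_of_succ_of_le (fun i j => BNStep f (π i) (π j))
    (fun i _ => by simpa only [Order.succ_eq_add_one] using hpath i) hab).lift π fun _ _ => id

theorem exists_infOften {n : ℕ} (π : ℕ → Fin n → Bool) : ∃ x, InfOften π x := by
  obtain ⟨x, hx⟩ := Finite.exists_infinite_fiber π
  exact ⟨x, Filter.frequently_atTop.1 <|
    Nat.frequently_atTop_iff_infinite.2 (Set.infinite_coe_iff.1 hx)⟩

theorem IsPath.mem_reach_of_infOften {n : ℕ} {f : Fin n → (Fin n → Bool) → Bool}
    {π : ℕ → Fin n → Bool} (hpath : IsPath f π) {s x : Fin n → Bool} (hs : InfOften π s)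
    (hx : InfOften π x) : x ∈ BNReach f s := by
  obtain ⟨i, -, rfl⟩ := hs 0
  obtain ⟨j, hij, rfl⟩ := hx i
  exact hpath.reach_of_le hij

theorem Fair.reach_subset {n : ℕ} {f : Fin n → (Fin n → Bool) → Bool} {π : ℕ → Fin n → Bool}
    (hfair : Fair f π) {s : Fin n → Bool} (hs : InfOften π s) :
    BNReach f s ⊆ {x | InfOften π x} := fun _ hx => by
  induction hx with
  | refl => exact hs
  | tail _ hstep ih => exact hfair _ ih _ hstep

/-- the set of states occurring infinitely often in a fair
infinite path is an attractor. -/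
theorem infOften_set_isAttractor {n : ℕ}
    (f : Fin n → (Fin n → Bool) → Bool) (π : ℕ → Fin n → Bool)
    (hpath : IsPath f π) (hfair : Fair f π) :
    IsAttractor f {x : Fin n → Bool | InfOften π x} :=
  ⟨exists_infOften π, fun _ hs =>
    (hfair.reach_subset hs).antisymm fun _ hx => hpath.mem_reach_of_infOften hs hx⟩
end

section
/- Necessity of the weak basin for temporary target control: let A_t be an attractor of an asynchronous Boolean network with n ≥ 1 nodes, and let C be a temporary target control for A_t. Then every intermediate state lies in the weak basin of A_t, i.e., C(S) ⊆ basW(A_t). -/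
/-!
Run the controlled network from `C(s)` under a scheduler that, at its `c`-th visit to a state,
updates node `c mod n`. Every state visited infinitely often then has each of its successors
visited infinitely often, so this path is fair, and as `C` is a temporary target control it meets
the strong basin of `A_t`, in particular the weak basin. On the other hand a controlled step from a
state fixed by `C` either does nothing (a controlled node already holds its forced value) or is a
step of the original network, so the whole path is reachable from `C(s)` in the original network.
-/

section Scheduler

variable {n : ℕ} (hn : 1 ≤ n) (g : Fin n → (Fin n → Bool) → Bool)

def scheduledNode (c : ℕ) : Fin n := ⟨c % n, Nat.mod_lt c hn⟩

lemma scheduledNode_add_mul (i : Fin n) (c : ℕ) : scheduledNode hn (i + n * c) = i :=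
  Fin.ext (by simp [scheduledNode, Nat.add_mul_mod_self_left, Nat.mod_eq_of_lt i.isLt])

/-- The current state together with the number of earlier visits to each state. -/
def counterSchedule (s₀ : Fin n → Bool) : ℕ → (Fin n → Bool) × ((Fin n → Bool) → ℕ)
  | 0 => (s₀, 0)
  | k + 1 =>
    let p := counterSchedule s₀ k
    let i := scheduledNode hn (p.2 p.1)
    (Function.update p.1 i (g i p.1), Function.update p.2 p.1 (p.2 p.1 + 1))

def schedulerPath (s₀ : Fin n → Bool) (k : ℕ) : Fin n → Bool := (counterSchedule hn g s₀ k).1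

def visitCount (s₀ : Fin n → Bool) (k : ℕ) (x : Fin n → Bool) : ℕ :=
  (counterSchedule hn g s₀ k).2 x

variable {hn g} {s₀ : Fin n → Bool}

lemma schedulerPath_succ (k : ℕ) :
    schedulerPath hn g s₀ (k + 1) =
      Function.update (schedulerPath hn g s₀ k)
        (scheduledNode hn (visitCount hn g s₀ k (schedulerPath hn g s₀ k)))
        (g (scheduledNode hn (visitCount hn g s₀ k (schedulerPath hn g s₀ k)))
          (schedulerPath hn g s₀ k)) :=
  rfl

lemma visitCount_succ (k : ℕ) (x : Fin n → Bool) :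
    visitCount hn g s₀ (k + 1) x =
      if x = schedulerPath hn g s₀ k then visitCount hn g s₀ k x + 1
      else visitCount hn g s₀ k x := by
  simp only [visitCount, schedulerPath, counterSchedule, Function.update_apply]
  split_ifs with h <;> simp [h]

lemma isPath_schedulerPath : IsPath g (schedulerPath hn g s₀) :=
  fun k => ⟨_, schedulerPath_succ k⟩

lemma visitCount_eq_of_forall_ne {x : Fin n → Bool} {a b : ℕ} (hab : a ≤ b)
    (hne : ∀ m, a ≤ m → m < b → schedulerPath hn g s₀ m ≠ x) :
    visitCount hn g s₀ b x = visitCount hn g s₀ a x := by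
  induction b, hab using Nat.le_induction with
  | base => rfl
  | succ b hab ih =>
    rw [visitCount_succ, if_neg (fun h => hne b hab b.lt_succ_self h.symm)]
    exact ih fun m ham hmb => hne m ham (by omega)

lemma exists_next_visit {x : Fin n → Bool} (hx : InfOften (schedulerPath hn g s₀) x) {k : ℕ}
    (hk : schedulerPath hn g s₀ k = x) :
    ∃ k' > k, schedulerPath hn g s₀ k' = x ∧
      visitCount hn g s₀ k' x = visitCount hn g s₀ k x + 1 := by
  classical
  have hvisit : ∃ m, k + 1 ≤ m ∧ schedulerPath hn g s₀ m = x := hx (k + 1)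
  obtain ⟨hle, hxk'⟩ := Nat.find_spec hvisit
  refine ⟨Nat.find hvisit, hle, hxk', ?_⟩
  rw [visitCount_eq_of_forall_ne hle fun m hm hmlt hmx => Nat.find_min hvisit hmlt ⟨hm, hmx⟩,
    visitCount_succ, if_pos hk.symm]

lemma exists_visit_with_count {x : Fin n → Bool} (hx : InfOften (schedulerPath hn g s₀) x)
    {k : ℕ} (hk : schedulerPath hn g s₀ k = x) {c : ℕ} (hc : visitCount hn g s₀ k x ≤ c) :
    ∃ k' ≥ k, schedulerPath hn g s₀ k' = x ∧ visitCount hn g s₀ k' x = c := by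
  induction c, hc using Nat.le_induction with
  | base => exact ⟨k, le_rfl, hk, rfl⟩
  | succ c _ ih =>
    obtain ⟨k', hkk', hxk', hck'⟩ := ih
    obtain ⟨k'', hk'k'', hxk'', hck''⟩ := exists_next_visit hx hxk'
    exact ⟨k'', by omega, hxk'', by rw [hck'', hck']⟩

lemma fair_schedulerPath : Fair g (schedulerPath hn g s₀) := by
  rintro x hx x' ⟨i, rfl⟩ N
  obtain ⟨k, hkN, hxk⟩ := hx N
  obtain ⟨k', hkk', hxk', hck'⟩ := exists_visit_with_count hx hxk
    (c := i + n * visitCount hn g s₀ k x) (by nlinarith)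
  refine ⟨k' + 1, by omega, ?_⟩
  rw [schedulerPath_succ, hxk', hck', scheduledNode_add_mul]

end Scheduler

lemma exists_fair_path {n : ℕ} (hn : 1 ≤ n) (g : Fin n → (Fin n → Bool) → Bool)
    (s₀ : Fin n → Bool) : ∃ π, π 0 = s₀ ∧ IsPath g π ∧ Fair g π :=
  ⟨schedulerPath hn g s₀, rfl, isPath_schedulerPath, fair_schedulerPath⟩

lemma IsPath.reflTransGen {n : ℕ} {g : Fin n → (Fin n → Bool) → Bool} {π : ℕ → Fin n → Bool}
    (hπ : IsPath g π) (k : ℕ) : Relation.ReflTransGen (BNStep g) (π 0) (π k) := by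
  induction k with
  | zero => exact .refl
  | succ k ih => exact ih.tail (hπ k)

section Control

variable {n : ℕ} {f : Fin n → (Fin n → Bool) → Bool} {O I : Finset (Fin n)}

@[simp]
lemma applyC_applyC (s : Fin n → Bool) : applyC O I (applyC O I s) = applyC O I s := by
  funext i
  simp only [applyC]
  split_ifs <;> rfl

lemma applyC_update_of_notMem {i : Fin n} (hO : i ∉ O) (hI : i ∉ I) (s : Fin n → Bool)
    (b : Bool) :
    applyC O I (Function.update s i b) = Function.update (applyC O I s) i b := by
  funext j
  by_cases hj : j = i
  · subst hj
    simp [applyC, hO, hI]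
  · simp [applyC, Function.update_of_ne hj]

lemma ctrlF_eq_applyC_of_mem {i : Fin n} (hi : i ∈ O ∨ i ∈ I) (s : Fin n → Bool) :
    ctrlF f O I i s = applyC O I s i := by
  simp only [ctrlF, applyC]
  split_ifs <;> simp_all

lemma ctrlF_of_notMem {i : Fin n} (hO : i ∉ O) (hI : i ∉ I) (s : Fin n → Bool) :
    ctrlF f O I i s = f i s := by
  simp [ctrlF, hO, hI]

lemma reflGen_of_ctrlF_step {s s' : Fin n → Bool} (hs : applyC O I s = s)
    (h : BNStep (ctrlF f O I) s s') :
    applyC O I s' = s' ∧ Relation.ReflGen (BNStep f) s s' := by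
  obtain ⟨i, rfl⟩ := h
  by_cases hi : i ∈ O ∨ i ∈ I
  · rw [ctrlF_eq_applyC_of_mem hi, hs, Function.update_eq_self]
    exact ⟨hs, .refl⟩
  · obtain ⟨hO, hI⟩ := not_or.mp hi
    rw [ctrlF_of_notMem hO hI, applyC_update_of_notMem hO hI, hs]
    exact ⟨rfl, .single ⟨i, rfl⟩⟩

lemma reflTransGen_of_ctrlF {s s' : Fin n → Bool} (hs : applyC O I s = s)
    (h : Relation.ReflTransGen (BNStep (ctrlF f O I)) s s') :
    Relation.ReflTransGen (BNStep f) s s' := by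
  suffices applyC O I s' = s' ∧ Relation.ReflTransGen (BNStep f) s s' from this.2
  induction h with
  | refl => exact ⟨hs, .refl⟩
  | tail _ hstep ih =>
    obtain ⟨hfix, hreach⟩ := reflGen_of_ctrlF_step ih.1 hstep
    exact ⟨hfix, ih.2.trans hreach.to_reflTransGen⟩

end Control

theorem ttc_intermediate_in_weak_basin_general {n : ℕ} (hn : 1 ≤ n)
    (f : Fin n → (Fin n → Bool) → Bool) (O I : Finset (Fin n))
    (At : Set (Fin n → Bool)) (hC : IsTTC f O I At) :
    Set.range (applyC O I) ⊆ basW f At := by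
  rintro _ ⟨s, rfl⟩
  obtain ⟨π, hπ0, hpath, hfair⟩ := exists_fair_path hn (ctrlF f O I) (applyC O I s)
  obtain ⟨k, ⟨a, hka, haAt⟩, -⟩ := hC s π hπ0 hpath hfair
  have hreach : Relation.ReflTransGen (BNStep f) (applyC O I s) (π k) :=
    reflTransGen_of_ctrlF (applyC_applyC s) (hπ0 ▸ hpath.reflTransGen k)
  exact ⟨a, hreach.trans hka, haAt⟩

/-- necessity of the weak basin for temporary target control:
if `C` is a temporary target control for the attractor `At`, then all
intermediate states lie in the weak basin of `At`. -/
theorem ttc_intermediate_in_weak_basin {n : ℕ} (hn : 1 ≤ n)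
    (f : Fin n → (Fin n → Bool) → Bool) (O I : Finset (Fin n))
    (hdisj : Disjoint O I) (At : Set (Fin n → Bool))
    (hAt : IsAttractor f At) (hC : IsTTC f O I At) :
    Set.range (applyC O I) ⊆ basW f At :=
  ttc_intermediate_in_weak_basin_general hn f O I At hC
end

section
/- Characterization of temporary target control (Lemma 1): let A_t be an attractor of an asynchronous Boolean network with n ≥ 1 nodes and let C = (O, I) be a control. Then C is a temporary target control for A_t if and only if (1) basS(A_t) ∩ S|C ≠ ∅, and (2) C(S) is contained in the strong basin, in the controlled network G|C, of the remaining strong basin basS(A_t) ∩ S|C; here the strong basin in G|C of a set T ⊆ S is {x ∈ S | every fair infinite path of G|C starting at x eventually reaches a state in T}. -/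
/-!
Since `C(S) ⊆ S|C` and `S|C` is closed under the controlled dynamics, a fair path of `G|C`
from `C(s)` meets `basS(A_t)` exactly when it meets `basS(A_t) ∩ S|C`; this gives both
directions, except that condition (1) needs at least one fair path of `G|C`. Such a path
exists for every serial relation on a countable type: leave each state `x`, on its `m`-th
visit, towards the `m`-th term of a sequence enumerating every successor of `x` infinitely
often.
-/

open Filter

theorem exists_seq_frequently_eq_of_serial {S : Type*} [Countable S] {R : S → S → Prop}
    (hR : ∀ x, ∃ y, R x y) :
    ∃ next : S → ℕ → S,
      ∀ x, (∀ m, R x (next x m)) ∧ ∀ y, R x y → ∃ᶠ m in atTop, next x m = y := by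
  have (x : S) : Nonempty {y // R x y} := let ⟨y, hy⟩ := hR x; ⟨⟨y, hy⟩⟩
  choose g hg using fun x => exists_surjective_nat {y // R x y}
  refine ⟨fun x m => g x m.unpair.1, fun x => ⟨fun m => (g x _).2, fun y hy => ?_⟩⟩
  obtain ⟨a, ha⟩ := hg x ⟨y, hy⟩
  refine frequently_atTop.2 fun N => ⟨Nat.pair a N, Nat.right_le_pair a N, ?_⟩
  simp [Nat.unpair_pair, ha]

section RoundRobin

variable {S : Type*} [DecidableEq S] (next : S → ℕ → S) (c : S)

/-- The walk from `c` leaving a state `x` towards `next x m` on its `m`-th visit, paired with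
the number of visits made so far to each state. -/
def roundRobinWalk : ℕ → S × (S → ℕ)
  | 0 => (c, 0)
  | k + 1 =>
    let p := roundRobinWalk k
    (next p.1 (p.2 p.1), Function.update p.2 p.1 (p.2 p.1 + 1))

variable {next c}

theorem roundRobinWalk_visits_succ (k : ℕ) (x : S) :
    (roundRobinWalk next c (k + 1)).2 x =
      (roundRobinWalk next c k).2 x + if (roundRobinWalk next c k).1 = x then 1 else 0 := by
  by_cases h : (roundRobinWalk next c k).1 = x
  · subst h; simp [roundRobinWalk]
  · simp [roundRobinWalk, h, Function.update_of_ne (Ne.symm h)]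

theorem roundRobinWalk_visits_le (k : ℕ) (x : S) : (roundRobinWalk next c k).2 x ≤ k := by
  induction k with
  | zero => simp [roundRobinWalk]
  | succ k ih => rw [roundRobinWalk_visits_succ]; split_ifs <;> omega

theorem monotone_roundRobinWalk_visits (x : S) :
    Monotone fun k => (roundRobinWalk next c k).2 x :=
  monotone_nat_of_le_succ fun k => by
    rw [roundRobinWalk_visits_succ]; exact Nat.le_add_right _ _

theorem exists_lt_roundRobinWalk_visits {x : S}
    (hx : ∃ᶠ k in atTop, (roundRobinWalk next c k).1 = x) (m : ℕ) :
    ∃ k, m < (roundRobinWalk next c k).2 x := by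
  induction m with
  | zero =>
    obtain ⟨k, -, hk⟩ := frequently_atTop.1 hx 0
    exact ⟨k + 1, by simp [roundRobinWalk_visits_succ, hk]⟩
  | succ m ih =>
    obtain ⟨k, hk⟩ := ih
    obtain ⟨j, hkj, hj⟩ := frequently_atTop.1 hx k
    have hmono : (roundRobinWalk next c k).2 x ≤ (roundRobinWalk next c j).2 x :=
      monotone_roundRobinWalk_visits x hkj
    refine ⟨j + 1, ?_⟩
    simp only [roundRobinWalk_visits_succ, hj, if_true]
    omega

theorem exists_roundRobinWalk_visits_eq {x : S}
    (hx : ∃ᶠ k in atTop, (roundRobinWalk next c k).1 = x) (m : ℕ) :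
    ∃ k, (roundRobinWalk next c k).1 = x ∧ (roundRobinWalk next c k).2 x = m := by
  classical
  have hm := exists_lt_roundRobinWalk_visits hx m
  -- The first time the counter of `x` exceeds `m` comes right after a visit with counter `m`.
  obtain ⟨k, hk⟩ : ∃ k, Nat.find hm = k + 1 := by
    refine Nat.exists_eq_succ_of_ne_zero fun h0 => ?_
    have := Nat.find_spec hm
    simp [h0, roundRobinWalk] at this
  have hlt := Nat.find_spec hm
  have hge := Nat.find_min hm (by omega : k < Nat.find hm)
  rw [hk, roundRobinWalk_visits_succ] at hlt
  refine ⟨k, ?_, ?_⟩ <;> split_ifs at hlt with h <;> omega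

theorem frequently_roundRobinWalk_of_rel {R : S → S → Prop}
    (hnext : ∀ x y, R x y → ∃ᶠ m in atTop, next x m = y) {x y : S}
    (hx : ∃ᶠ k in atTop, (roundRobinWalk next c k).1 = x) (hxy : R x y) :
    ∃ᶠ k in atTop, (roundRobinWalk next c k).1 = y := by
  refine frequently_atTop.2 fun N => ?_
  obtain ⟨m, hNm, hm⟩ := frequently_atTop.1 (hnext x y hxy) N
  obtain ⟨k, hk, hkm⟩ := exists_roundRobinWalk_visits_eq hx m
  have hmk : m ≤ k := hkm ▸ roundRobinWalk_visits_le k x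
  exact ⟨k + 1, by omega, by simp [roundRobinWalk, hk, hkm, hm]⟩

end RoundRobin

theorem exists_fair_path_of_serial {S : Type*} [Countable S] {R : S → S → Prop}
    (hR : ∀ x, ∃ y, R x y) (c : S) :
    ∃ π : ℕ → S, π 0 = c ∧ (∀ k, R (π k) (π (k + 1))) ∧
      ∀ x y, (∃ᶠ k in atTop, π k = x) → R x y → ∃ᶠ k in atTop, π k = y := by
  classical
  obtain ⟨next, hnext⟩ := exists_seq_frequently_eq_of_serial hR
  refine ⟨fun k => (roundRobinWalk next c k).1, rfl, fun k => (hnext _).1 _, ?_⟩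
  exact fun x y hx hxy => frequently_roundRobinWalk_of_rel (fun x => (hnext x).2) hx hxy

theorem bnStep_serial {n : ℕ} (hn : 1 ≤ n) (f : Fin n → (Fin n → Bool) → Bool)
    (s : Fin n → Bool) : ∃ s', BNStep f s s' :=
  ⟨_, ⟨0, hn⟩, rfl⟩

theorem exists_isPath_fair {n : ℕ} (hn : 1 ≤ n) (f : Fin n → (Fin n → Bool) → Bool)
    (s : Fin n → Bool) : ∃ π, π 0 = s ∧ IsPath f π ∧ Fair f π := by
  obtain ⟨π, hπ0, hpath, hfair⟩ := exists_fair_path_of_serial (bnStep_serial hn f) s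
  exact ⟨π, hπ0, hpath, fun x hx y hxy =>
    frequently_atTop.1 (hfair x y (frequently_atTop.2 hx) hxy)⟩

section Control

variable {n : ℕ} {O I : Finset (Fin n)}

theorem applyC_mem_restrC (hdisj : Disjoint O I) (s : Fin n → Bool) :
    applyC O I s ∈ restrC O I :=
  ⟨fun i hi => by simp [applyC, hi],
    fun i hi => by simp [applyC, hi, Finset.disjoint_right.1 hdisj hi]⟩

theorem mem_restrC_of_bnStep_ctrlF (hdisj : Disjoint O I) {f : Fin n → (Fin n → Bool) → Bool}
    {s s' : Fin n → Bool} (hs : s ∈ restrC O I) (hstep : BNStep (ctrlF f O I) s s') :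
    s' ∈ restrC O I := by
  obtain ⟨i, rfl⟩ := hstep
  refine ⟨fun j hj => ?_, fun j hj => ?_⟩ <;> rcases eq_or_ne j i with rfl | hji
  · simp [ctrlF, hj]
  · simpa [Function.update_of_ne hji] using hs.1 j hj
  · simp [ctrlF, hj, Finset.disjoint_right.1 hdisj hj]
  · simpa [Function.update_of_ne hji] using hs.2 j hj

theorem IsPath.mem_restrC (hdisj : Disjoint O I) {f : Fin n → (Fin n → Bool) → Bool}
    {π : ℕ → Fin n → Bool} (hπ : IsPath (ctrlF f O I) π) (h0 : π 0 ∈ restrC O I)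
    (k : ℕ) : π k ∈ restrC O I := by
  induction k with
  | zero => exact h0
  | succ k ih => exact mem_restrC_of_bnStep_ctrlF hdisj ih (hπ k)

end Control

theorem ttc_characterization_general {n : ℕ} (hn : 1 ≤ n)
    (f : Fin n → (Fin n → Bool) → Bool) (O I : Finset (Fin n))
    (hdisj : Disjoint O I) (At : Set (Fin n → Bool)) :
    IsTTC f O I At ↔
      (basS f At ∩ restrC O I).Nonempty ∧
      Set.range (applyC O I) ⊆
        {x : Fin n → Bool | ∀ π : ℕ → Fin n → Bool,
          π 0 = x → IsPath (ctrlF f O I) π → Fair (ctrlF f O I) π →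
          ∃ k : ℕ, π k ∈ basS f At ∩ restrC O I} := by
  have stays {π : ℕ → Fin n → Bool} {s : Fin n → Bool} (h0 : π 0 = applyC O I s)
      (hπ : IsPath (ctrlF f O I) π) (k : ℕ) : π k ∈ restrC O I :=
    hπ.mem_restrC hdisj (h0 ▸ applyC_mem_restrC hdisj s) k
  refine ⟨fun httc => ⟨?_, ?_⟩, fun ⟨_, hbasin⟩ s π h0 hπ hfair => ?_⟩
  · obtain ⟨π, h0, hπ, hfair⟩ := exists_isPath_fair hn (ctrlF f O I) (applyC O I default)
    obtain ⟨k, hk⟩ := httc default π h0 hπ hfair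
    exact ⟨π k, hk, stays h0 hπ k⟩
  · rintro _ ⟨s, rfl⟩ π h0 hπ hfair
    obtain ⟨k, hk⟩ := httc s π h0 hπ hfair
    exact ⟨k, hk, stays h0 hπ k⟩
  · obtain ⟨k, hk, -⟩ := hbasin ⟨s, rfl⟩ π h0 hπ hfair
    exact ⟨k, hk⟩

/-- Lemma 1: `C` is a temporary target control for `At` iff
`basS(At) ∩ S|C ≠ ∅` and `C(S)` is contained in the strong basin, in the
controlled network `G|C`, of the remaining strong basin `basS(At) ∩ S|C`. -/
theorem ttc_characterization {n : ℕ} (hn : 1 ≤ n)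
    (f : Fin n → (Fin n → Bool) → Bool) (O I : Finset (Fin n))
    (hdisj : Disjoint O I) (At : Set (Fin n → Bool))
    (hAt : IsAttractor f At) :
    IsTTC f O I At ↔
      (basS f At ∩ restrC O I).Nonempty ∧
      Set.range (applyC O I) ⊆
        {x : Fin n → Bool | ∀ π : ℕ → Fin n → Bool,
          π 0 = x → IsPath (ctrlF f O I) π → Fair (ctrlF f O I) π →
          ∃ k : ℕ, π k ∈ basS f At ∩ restrC O I} :=
  ttc_characterization_general hn f O I hdisj At
end
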